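/- Define μ_{[2,1]}(p_0,p_3,p_1) := 38[p_1(12 + p_0 + q_3) − 6q_0 − 7q_3] / {3(367 + 111p_0 + 8p_0p_1 + 16p_0q_3 + 8p_1p_3 + 8q_1 + 119q_3)} with q_m := 1−p_m. Then μ_{[2,1]}(p_0,p_3,p_1) = −μ_{[2,1]}(1−p_3, 1−p_0, 1−p_1), and in particular if p_0 + p_3 = 1 and p_1 = 1/2 then μ_{[2,1]} = 0. -/
import Mathlib


/-- The mean profit per turn `μ_{[2,1]}(p_0,p_3,p_1)` for the pattern `AAB` with `N = 3`
players and `p_1 = p_2`, with `q_m := 1 − p_m`. -/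
noncomputable def mu21 (p0 p3 p1 : ℝ) : ℝ :=
  38 * (p1 * (12 + p0 + (1 - p3)) - 6 * (1 - p0) - 7 * (1 - p3)) /
    (3 * (367 + 111 * p0 + 8 * p0 * p1 + 16 * p0 * (1 - p3) + 8 * p1 * p3 +
      8 * (1 - p1) + 119 * (1 - p3)))

/-- `μ_{[2,1]}(p_0,p_3,p_1) = −μ_{[2,1]}(1−p_3, 1−p_0, 1−p_1)`; in
particular, if `p_0 + p_3 = 1` and `p_1 = 1/2` then `μ_{[2,1]} = 0`. -/
theorem stmt_15 (p0 p1 p3 : ℝ)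
    (h0 : p0 ∈ Set.Ioo (0 : ℝ) 1) (h1 : p1 ∈ Set.Ioo (0 : ℝ) 1)
    (h3 : p3 ∈ Set.Ioo (0 : ℝ) 1) :
    mu21 p0 p3 p1 = -mu21 (1 - p3) (1 - p0) (1 - p1) ∧
    (p0 + p3 = 1 → p1 = 1 / 2 → mu21 p0 p3 p1 = 0) := by
  obtain ⟨a0, b0⟩ := h0
  obtain ⟨a1, b1⟩ := h1
  obtain ⟨a3, b3⟩ := h3
  have hD : (3 * (367 + 111 * p0 + 8 * p0 * p1 + 16 * p0 * (1 - p3) + 8 * p1 * p3 +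
      8 * (1 - p1) + 119 * (1 - p3))) ≠ 0 := by nlinarith
  have hD' : (3 * (367 + 111 * (1 - p3) + 8 * (1 - p3) * (1 - p1) +
      16 * (1 - p3) * (1 - (1 - p0)) + 8 * (1 - p1) * (1 - p0) +
      8 * (1 - (1 - p1)) + 119 * (1 - (1 - p0)))) ≠ 0 := by nlinarith
  constructor
  · unfold mu21
    rw [show (3 * (367 + 111 * (1 - p3) + 8 * (1 - p3) * (1 - p1) +
      16 * (1 - p3) * (1 - (1 - p0)) + 8 * (1 - p1) * (1 - p0) +
      8 * (1 - (1 - p1)) + 119 * (1 - (1 - p0)))) =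
      (3 * (367 + 111 * p0 + 8 * p0 * p1 + 16 * p0 * (1 - p3) + 8 * p1 * p3 +
      8 * (1 - p1) + 119 * (1 - p3))) from by ring, ← neg_div]
    congr 1
    ring
  · intro hp hhalf
    have : p3 = 1 - p0 := by linarith
    subst this hhalf
    unfold mu21
    rw [div_eq_zero_iff]
    left
    ring
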